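/- arXiv:2105.14397 — 3 statements merged into one kernel-verified Lean document; each statement's English description precedes it below -/
import Mathlib

section
/- If M is a minimizer of ∑_{k=1}^N d_H(M, A^{(k)}) over adjacency matrices of simple graphs on n vertices (a sample Fréchet median for the Hamming distance), then its number of edges satisfies e(M) ≤ 2·ē_N, where ē_N = (1/N)∑_{k=1}^N e(A^{(k)}) is the sample mean number of edges. -/
open Finset

/-- `A` is the adjacency matrix of a simple labeled graph on `n` vertices:
symmetric, `{0,1}`-valued, zero diagonal. -/
def IsAdj {n : ℕ} (A : Matrix (Fin n) (Fin n) ℝ) : Prop :=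
  (∀ i j, A i j = 0 ∨ A i j = 1) ∧ (∀ i j, A i j = A j i) ∧ (∀ i, A i i = 0)

/-- Number of edges `e(A) = ∑_{i<j} a_{ij}`. -/
def edges {n : ℕ} (A : Matrix (Fin n) (Fin n) ℝ) : ℝ :=
  ∑ i : Fin n, ∑ j : Fin n, if i < j then A i j else 0

/-- Hamming distance `d_H(A,B) = ∑_{i<j} |a_{ij} - b_{ij}|`. -/
def hammingD {n : ℕ} (A B : Matrix (Fin n) (Fin n) ℝ) : ℝ :=
  ∑ i : Fin n, ∑ j : Fin n, if i < j then |A i j - B i j| else 0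

/-!
The empty graph is a competitor, so the total distance of the median `M` to the sample is at
most the distance of the empty graph to it, which is `∑ₖ e(A⁽ᵏ⁾)`. On the other hand
`e(M) ≤ d_H(M, A⁽ᵏ⁾) + e(A⁽ᵏ⁾)` for every `k`, and summing over `k` gives
`N e(M) ≤ 2 ∑ₖ e(A⁽ᵏ⁾)`.
-/

lemma isAdj_zero {n : ℕ} : IsAdj (0 : Matrix (Fin n) (Fin n) ℝ) :=
  ⟨fun _ _ => Or.inl rfl, fun _ _ => rfl, fun _ => rfl⟩

lemma IsAdj.nonneg {n : ℕ} {A : Matrix (Fin n) (Fin n) ℝ} (hA : IsAdj A) (i j : Fin n) :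
    0 ≤ A i j := by
  rcases hA.1 i j with h | h <;> simp [h]

lemma hammingD_zero_left {n : ℕ} {A : Matrix (Fin n) (Fin n) ℝ} (hA : ∀ i j, 0 ≤ A i j) :
    hammingD 0 A = edges A := by
  unfold hammingD edges
  refine sum_congr rfl fun i _ => sum_congr rfl fun j _ => ?_
  simp [abs_of_nonneg (hA i j)]

lemma edges_sub_edges_le_hammingD {n : ℕ} (M A : Matrix (Fin n) (Fin n) ℝ) :
    edges M - edges A ≤ hammingD M A := by
  unfold edges hammingD
  simp only [← sum_sub_distrib]
  gcongr with i _ j _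
  split_ifs
  · exact le_abs_self _
  · simp

lemma card_mul_edges_le_sum_hammingD_add_sum_edges {ι : Type*} [Fintype ι] {n : ℕ}
    (M : Matrix (Fin n) (Fin n) ℝ) (A : ι → Matrix (Fin n) (Fin n) ℝ) :
    Fintype.card ι * edges M ≤ ∑ k, hammingD M (A k) + ∑ k, edges (A k) := by
  have h := sum_le_sum fun k (_ : k ∈ univ) => edges_sub_edges_le_hammingD M (A k)
  simp only [sum_sub_distrib, sum_const, card_univ, nsmul_eq_mul] at h
  linarith

theorem median_edges_le_two_mean_general {n N : ℕ} (hN : 0 < N)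
    (A : Fin N → Matrix (Fin n) (Fin n) ℝ) (hA : ∀ k, IsAdj (A k))
    (M : Matrix (Fin n) (Fin n) ℝ)
    (hmin : ∀ B : Matrix (Fin n) (Fin n) ℝ, IsAdj B →
      ∑ k : Fin N, hammingD M (A k) ≤ ∑ k : Fin N, hammingD B (A k)) :
    edges M ≤ 2 * ((1 : ℝ) / N * ∑ k : Fin N, edges (A k)) := by
  have hdist : ∑ k, hammingD M (A k) ≤ ∑ k, edges (A k) := by
    simpa only [hammingD_zero_left (hA _).nonneg] using hmin 0 isAdj_zero
  have hsum := card_mul_edges_le_sum_hammingD_add_sum_edges M A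
  rw [Fintype.card_fin] at hsum
  have hNpos : (0 : ℝ) < N := by exact_mod_cast hN
  rw [← mul_assoc, mul_one_div, div_mul_eq_mul_div, le_div_iff₀' hNpos]
  linarith

theorem median_edges_le_two_mean {n N : ℕ} (hN : 0 < N)
    (A : Fin N → Matrix (Fin n) (Fin n) ℝ) (hA : ∀ k, IsAdj (A k))
    (M : Matrix (Fin n) (Fin n) ℝ) (hM : IsAdj M)
    (hmin : ∀ B : Matrix (Fin n) (Fin n) ℝ, IsAdj B →
      ∑ k : Fin N, hammingD M (A k) ≤ ∑ k : Fin N, hammingD B (A k)) :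
    edges M ≤ 2 * ((1 : ℝ) / N * ∑ k : Fin N, edges (A k)) :=
  median_edges_le_two_mean_general hN A hA M hmin
end

section
/- Let M be the majority-rule matrix (M_{ij}=1 iff ∑_k a^{(k)}_{ij} ≥ N/2 for i<j). Then (1/N)∑_{k=1}^N d_H(M, A^{(k)})² ≤ 2·ē_N² + σ_N²(e), where ē_N is the sample mean number of edges and σ_N²(e) = (1/N)∑_k e(A^{(k)})² - ē_N² is the sample variance of edge counts. -/
open Finset

/-!
Write `m = e(M)`, `e_k = e(A⁽ᵏ⁾)` and `s_k` for the number of edges common to `M` and `A⁽ᵏ⁾`.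
For `{0,1}`-matrices `d_H(M, A⁽ᵏ⁾) = m + e_k - 2 s_k`, and `0 ≤ s_k ≤ e_k` gives
`d_H(M, A⁽ᵏ⁾)² ≤ e_k² + m (m + 2 e_k - 4 s_k)`. Every edge of the majority graph lies in at least
half of the `A⁽ᵏ⁾`, so `N m ≤ 2 ∑ s_k`; summing, `N ∑ d_H² ≤ N ∑ e_k² + N m (2 ∑ e_k - N m)`,
and the last term is at most `(∑ e_k)²`.
-/

theorem card_mul_sum_sq_le_of_two_mul_sum_ge {ι : Type*} (t : Finset ι) {m : ℝ}
    {e s : ι → ℝ} (hm : 0 ≤ m) (hs : ∀ k ∈ t, 0 ≤ s k) (hse : ∀ k ∈ t, s k ≤ e k)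
    (hmaj : #t * m ≤ 2 * ∑ k ∈ t, s k) :
    #t * ∑ k ∈ t, (m + e k - 2 * s k) ^ 2 ≤ #t * ∑ k ∈ t, e k ^ 2 + (∑ k ∈ t, e k) ^ 2 := by
  have hpoint : ∀ k ∈ t, (m + e k - 2 * s k) ^ 2 ≤ e k ^ 2 + m * (m + 2 * e k - 4 * s k) :=
    fun k hk => by nlinarith [mul_le_mul_of_nonneg_left (hse k hk) (hs k hk)]
  have hsum : ∑ k ∈ t, (m + e k - 2 * s k) ^ 2 ≤
      ∑ k ∈ t, e k ^ 2 + m * (2 * ∑ k ∈ t, e k - #t * m) := by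
    calc ∑ k ∈ t, (m + e k - 2 * s k) ^ 2
        ≤ ∑ k ∈ t, (e k ^ 2 + m * (m + 2 * e k - 4 * s k)) := sum_le_sum hpoint
      _ = ∑ k ∈ t, e k ^ 2 + m * (#t * m + 2 * ∑ k ∈ t, e k - 4 * ∑ k ∈ t, s k) := by
        simp only [sum_add_distrib, sum_sub_distrib, ← mul_sum, sum_const, nsmul_eq_mul]
      _ ≤ ∑ k ∈ t, e k ^ 2 + m * (2 * ∑ k ∈ t, e k - #t * m) := by
        nlinarith [mul_le_mul_of_nonneg_left hmaj hm]
  nlinarith [sq_nonneg (#t * m - ∑ k ∈ t, e k), mul_le_mul_of_nonneg_left hsum (Nat.cast_nonneg #t)]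

theorem abs_sub_eq_add_sub_two_mul_of_zero_or_one {x y : ℝ} (hx : x = 0 ∨ x = 1)
    (hy : y = 0 ∨ y = 1) : |x - y| = x + y - 2 * (x * y) := by
  rcases hx with rfl | rfl <;> rcases hy with rfl | rfl <;> norm_num

section

variable {n : ℕ}

def commonEdges (A B : Matrix (Fin n) (Fin n) ℝ) : ℝ :=
  ∑ i : Fin n, ∑ j : Fin n, if i < j then A i j * B i j else 0

theorem hammingD_eq_edges_add_edges_sub_two_mul_commonEdges {A B : Matrix (Fin n) (Fin n) ℝ}
    (hA : ∀ i j, i < j → A i j = 0 ∨ A i j = 1) (hB : ∀ i j, i < j → B i j = 0 ∨ B i j = 1) :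
    hammingD A B = edges A + edges B - 2 * commonEdges A B := by
  simp only [hammingD, edges, commonEdges, mul_sum, ← sum_add_distrib, ← sum_sub_distrib]
  refine sum_congr rfl fun i _ => sum_congr rfl fun j _ => ?_
  split_ifs with h
  · exact abs_sub_eq_add_sub_two_mul_of_zero_or_one (hA i j h) (hB i j h)
  · ring

theorem edges_nonneg {A : Matrix (Fin n) (Fin n) ℝ} (hA : ∀ i j, i < j → 0 ≤ A i j) :
    0 ≤ edges A :=
  sum_nonneg fun i _ => sum_nonneg fun j _ => by
    split_ifs with h
    exacts [hA i j h, le_rfl]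

theorem commonEdges_nonneg {A B : Matrix (Fin n) (Fin n) ℝ} (hA : ∀ i j, i < j → 0 ≤ A i j)
    (hB : ∀ i j, i < j → 0 ≤ B i j) : 0 ≤ commonEdges A B :=
  sum_nonneg fun i _ => sum_nonneg fun j _ => by
    split_ifs with h
    exacts [mul_nonneg (hA i j h) (hB i j h), le_rfl]

theorem commonEdges_le_edges_right {A B : Matrix (Fin n) (Fin n) ℝ}
    (hA : ∀ i j, i < j → A i j ≤ 1) (hB : ∀ i j, i < j → 0 ≤ B i j) :
    commonEdges A B ≤ edges B :=
  sum_le_sum fun i _ => sum_le_sum fun j _ => by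
    split_ifs with h
    exacts [mul_le_of_le_one_left (hB i j h) (hA i j h), le_rfl]

theorem card_mul_edges_le_two_mul_sum_commonEdges {ι : Type*} (t : Finset ι)
    (A : ι → Matrix (Fin n) (Fin n) ℝ) {M : Matrix (Fin n) (Fin n) ℝ}
    (hM : ∀ i j, i < j → M i j = if (#t : ℝ) / 2 ≤ ∑ k ∈ t, A k i j then 1 else 0) :
    #t * edges M ≤ 2 * ∑ k ∈ t, commonEdges M (A k) := by
  have hentry : ∀ i j, (if i < j then #t * M i j else 0) ≤
      if i < j then 2 * ∑ k ∈ t, M i j * A k i j else 0 := fun i j => by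
    split_ifs with h
    · rw [← mul_sum, hM i j h]
      split_ifs <;> linarith
    · rfl
  calc #t * edges M = ∑ i, ∑ j, if i < j then #t * M i j else 0 := by
        simp only [edges, mul_sum, mul_ite, mul_zero]
    _ ≤ ∑ i, ∑ j, if i < j then 2 * ∑ k ∈ t, M i j * A k i j else 0 :=
        sum_le_sum fun i _ => sum_le_sum fun j _ => hentry i j
    _ = 2 * ∑ k ∈ t, commonEdges M (A k) := by
        simp only [commonEdges, mul_sum, mul_ite, mul_zero]
        conv_rhs => rw [sum_comm]; enter [2, i]; rw [sum_comm]
        simp only [sum_ite_irrel, sum_const_zero]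

end

theorem frechet_fn_at_majority_median_general {n N : ℕ}
    (A : Fin N → Matrix (Fin n) (Fin n) ℝ) (hA : ∀ k, IsAdj (A k))
    (M : Matrix (Fin n) (Fin n) ℝ)
    (hM : ∀ i j : Fin n, i < j →
      M i j = if (N : ℝ) / 2 ≤ ∑ k : Fin N, A k i j then 1 else 0) :
    (1 : ℝ) / N * ∑ k : Fin N, (hammingD M (A k)) ^ 2 ≤
      2 * ((1 : ℝ) / N * ∑ k : Fin N, edges (A k)) ^ 2 +
        ((1 : ℝ) / N * ∑ k : Fin N, (edges (A k)) ^ 2 -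
          ((1 : ℝ) / N * ∑ k : Fin N, edges (A k)) ^ 2) := by
  have hM01 : ∀ i j, i < j → M i j = 0 ∨ M i j = 1 := fun i j h => by
    rw [hM i j h]; split_ifs <;> simp
  have hA01 : ∀ k i j, i < j → A k i j = 0 ∨ A k i j = 1 := fun k i j _ => (hA k).1 i j
  have hM0 : ∀ i j, i < j → 0 ≤ M i j := fun i j h => by
    rcases hM01 i j h with hm | hm <;> simp [hm]
  have hM1 : ∀ i j, i < j → M i j ≤ 1 := fun i j h => by
    rcases hM01 i j h with hm | hm <;> simp [hm]
  have hA0 : ∀ k i j, i < j → 0 ≤ A k i j := fun k i j h => by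
    rcases hA01 k i j h with ha | ha <;> simp [ha]
  have key := card_mul_sum_sq_le_of_two_mul_sum_ge univ (edges_nonneg hM0)
    (fun k _ => commonEdges_nonneg hM0 (hA0 k)) (fun k _ => commonEdges_le_edges_right hM1 (hA0 k))
    (card_mul_edges_le_two_mul_sum_commonEdges univ A (by simpa only [card_univ, Fintype.card_fin]))
  simp only [← hammingD_eq_edges_add_edges_sub_two_mul_commonEdges hM01 (hA01 _), card_univ,
    Fintype.card_fin] at key
  -- `(1/N)² N = 1/N` holds also for `N = 0`, since `1/0 = 0`.
  have hsq : ((1 : ℝ) / N) ^ 2 * N = 1 / N := by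
    simpa [sq] using mul_self_mul_inv ((N : ℝ)⁻¹)
  calc (1 : ℝ) / N * ∑ k : Fin N, (hammingD M (A k)) ^ 2
      = ((1 : ℝ) / N) ^ 2 * (N * ∑ k : Fin N, (hammingD M (A k)) ^ 2) := by
        rw [← mul_assoc, hsq]
    _ ≤ ((1 : ℝ) / N) ^ 2 *
          (N * ∑ k : Fin N, (edges (A k)) ^ 2 + (∑ k : Fin N, edges (A k)) ^ 2) := by
        gcongr
    _ = _ := by rw [mul_add, ← mul_assoc, hsq]; ring

theorem frechet_fn_at_majority_median {n N : ℕ} (hN : 0 < N)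
    (A : Fin N → Matrix (Fin n) (Fin n) ℝ) (hA : ∀ k, IsAdj (A k))
    (M : Matrix (Fin n) (Fin n) ℝ) (hMadj : IsAdj M)
    (hM : ∀ i j : Fin n, i < j →
      M i j = if (N : ℝ) / 2 ≤ ∑ k : Fin N, A k i j then 1 else 0) :
    (1 : ℝ) / N * ∑ k : Fin N, (hammingD M (A k)) ^ 2 ≤
      2 * ((1 : ℝ) / N * ∑ k : Fin N, edges (A k)) ^ 2 +
        ((1 : ℝ) / N * ∑ k : Fin N, (edges (A k)) ^ 2 -
          ((1 : ℝ) / N * ∑ k : Fin N, edges (A k)) ^ 2) :=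
  frechet_fn_at_majority_median_general A hA M hM
end

section
/- If Ā is a sample Fréchet mean with respect to the adjacency spectral pseudometric (its eigenvalue vector λ(Ā) minimizes ∑_k ‖λ - λ(A^{(k)})‖² over eigenvalue vectors of adjacency matrices), then ‖λ(Ā)‖ ≤ 3√(2·ē_N), assuming there exists k₀ with ‖λ(A^{(k₀)})‖ ≤ ‖λ̄‖ where λ̄ is the mean eigenvalue vector. -/
open Finset

/-- Euclidean norm of a vector in `ℝⁿ`. -/
noncomputable def vnorm {n : ℕ} (v : Fin n → ℝ) : ℝ :=
  Real.sqrt (∑ i : Fin n, v i ^ 2)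

/-!
For a real symmetric matrix `‖λ(A)‖² = tr(A²)`, which for an adjacency matrix is `2e(A)`.
In Euclidean space the sum of squared distances to points `a₁, …, a_N` splits as
`∑ₖ ‖x - aₖ‖² = N ‖x - ā‖² + ∑ₖ ‖ā - aₖ‖²` around their mean `ā`. Hence a minimiser `x` among
the spectra is at least as close to `λ̄` as the competitor `λ(A^{(k₀)})`, and the triangle
inequality gives `‖x‖ ≤ ‖λ(A^{(k₀)})‖ + 2‖λ̄‖ ≤ 3‖λ̄‖`. Taking `x = 0` in the same identity gives
`‖λ̄‖² ≤ (1/N) ∑ₖ ‖λ(A^{(k)})‖² = 2ē_N`.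
-/

section SumOfSquaredDistances

variable {E : Type*} [NormedAddCommGroup E] [InnerProductSpace ℝ E] {ι : Type*}
  (s : Finset ι) (a : ι → E)

theorem sum_norm_sub_sq_eq_card_mul_add (x : E) :
    ∑ k ∈ s, ‖x - a k‖ ^ 2 =
      #s * ‖x - (#s : ℝ)⁻¹ • ∑ k ∈ s, a k‖ ^ 2 +
        ∑ k ∈ s, ‖(#s : ℝ)⁻¹ • ∑ k ∈ s, a k - a k‖ ^ 2 := by
  set c := (#s : ℝ)⁻¹ • ∑ k ∈ s, a k
  have hc : ∑ k ∈ s, (c - a k) = 0 := by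
    rcases s.eq_empty_or_nonempty with rfl | hs
    · simp
    · rw [sum_sub_distrib, sum_const, ← Nat.cast_smul_eq_nsmul ℝ,
        smul_inv_smul₀ (by exact_mod_cast hs.card_pos.ne'), sub_self]
  calc ∑ k ∈ s, ‖x - a k‖ ^ 2
      = ∑ k ∈ s, (‖x - c‖ ^ 2 + 2 * inner ℝ (x - c) (c - a k) + ‖c - a k‖ ^ 2) := by
        refine sum_congr rfl fun k _ => ?_
        rw [← norm_add_sq_real, sub_add_sub_cancel]
    _ = #s * ‖x - c‖ ^ 2 + ∑ k ∈ s, ‖c - a k‖ ^ 2 := by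
        rw [sum_add_distrib, sum_add_distrib, ← mul_sum, ← inner_sum, hc, inner_zero_right]
        simp

theorem card_mul_norm_centroid_sq_le :
    #s * ‖(#s : ℝ)⁻¹ • ∑ k ∈ s, a k‖ ^ 2 ≤ ∑ k ∈ s, ‖a k‖ ^ 2 := by
  have h := sum_norm_sub_sq_eq_card_mul_add s a 0
  simp only [zero_sub, norm_neg] at h
  rw [h]
  exact le_add_of_nonneg_right (sum_nonneg fun k _ => sq_nonneg _)

theorem norm_centroid_le_sqrt_inv_card_mul_sum_sq :
    ‖(#s : ℝ)⁻¹ • ∑ k ∈ s, a k‖ ≤ √((#s : ℝ)⁻¹ * ∑ k ∈ s, ‖a k‖ ^ 2) := by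
  refine Real.le_sqrt_of_sq_le ?_
  rcases s.eq_empty_or_nonempty with rfl | hs
  · simp
  have hcard : (0 : ℝ) < #s := by exact_mod_cast hs.card_pos
  rw [le_inv_mul_iff₀ hcard]
  exact card_mul_norm_centroid_sq_le s a

theorem norm_sub_centroid_le_of_sum_norm_sub_sq_le (hs : s.Nonempty) {x y : E}
    (h : ∑ k ∈ s, ‖x - a k‖ ^ 2 ≤ ∑ k ∈ s, ‖y - a k‖ ^ 2) :
    ‖x - (#s : ℝ)⁻¹ • ∑ k ∈ s, a k‖ ≤ ‖y - (#s : ℝ)⁻¹ • ∑ k ∈ s, a k‖ := by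
  rw [sum_norm_sub_sq_eq_card_mul_add s a x, sum_norm_sub_sq_eq_card_mul_add s a y] at h
  have hcard : (0 : ℝ) < #s := by exact_mod_cast hs.card_pos
  exact (sq_le_sq₀ (norm_nonneg _) (norm_nonneg _)).mp
    (le_of_mul_le_mul_left (le_of_add_le_add_right h) hcard)

theorem norm_le_three_mul_norm_centroid (hs : s.Nonempty) {x y : E}
    (h : ∑ k ∈ s, ‖x - a k‖ ^ 2 ≤ ∑ k ∈ s, ‖y - a k‖ ^ 2)
    (hy : ‖y‖ ≤ ‖(#s : ℝ)⁻¹ • ∑ k ∈ s, a k‖) :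
    ‖x‖ ≤ 3 * ‖(#s : ℝ)⁻¹ • ∑ k ∈ s, a k‖ := by
  set c := (#s : ℝ)⁻¹ • ∑ k ∈ s, a k
  calc ‖x‖ ≤ ‖x - c‖ + ‖c‖ := norm_le_norm_sub_add x c
    _ ≤ ‖y - c‖ + ‖c‖ := by gcongr; exact norm_sub_centroid_le_of_sum_norm_sub_sq_le s a hs h
    _ ≤ ‖y‖ + ‖c‖ + ‖c‖ := by gcongr; exact norm_sub_le y c
    _ ≤ 3 * ‖c‖ := by linarith

end SumOfSquaredDistances

theorem Finset.sum_sum_eq_two_nsmul_sum_sum_lt {α M : Type*} [Fintype α] [LinearOrder α]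
    [AddCommMonoid M] (f : α → α → M) (hf : ∀ i j, f i j = f j i) (hdiag : ∀ i, f i i = 0) :
    ∑ i, ∑ j, f i j = 2 • ∑ i, ∑ j, if i < j then f i j else 0 := by
  have hsplit : ∀ i j, f i j = (if i < j then f i j else 0) + (if j < i then f j i else 0) := by
    intro i j
    rcases lt_trichotomy i j with h | rfl | h
    · simp [h, h.not_gt]
    · simp [hdiag]
    · rw [if_neg h.not_gt, if_pos h, zero_add, hf]
  rw [sum_congr rfl fun i _ => sum_congr rfl fun j _ => hsplit i j]
  simp only [sum_add_distrib]
  rw [sum_comm (f := fun i j => if j < i then f j i else 0), two_nsmul]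

theorem Matrix.IsHermitian.trace_mul_self_eq_sum_eigenvalues_sq {n : Type*} [Fintype n] [DecidableEq n]
    {A : Matrix n n ℝ} (hA : A.IsHermitian) : (A * A).trace = ∑ i, hA.eigenvalues i ^ 2 := by
  set U : Matrix n n ℝ := (hA.eigenvectorUnitary : Matrix n n ℝ)
  have hU : star U * U = 1 := Unitary.coe_star_mul_self _
  have hspec : A = U * diagonal hA.eigenvalues * star U := by
    conv_lhs => rw [hA.spectral_theorem, Unitary.conjStarAlgAut_apply]
    rfl
  clear_value U
  generalize hA.eigenvalues = d at hspec ⊢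
  subst hspec
  calc (U * diagonal d * star U * (U * diagonal d * star U)).trace
      = (U * (diagonal d * (star U * U) * diagonal d) * star U).trace := by
        simp only [mul_assoc]
    _ = ∑ i, d i ^ 2 := by
        rw [hU, mul_one, trace_mul_cycle, hU, one_mul, diagonal_mul_diagonal, trace_diagonal]
        simp only [sq]

namespace IsAdj

variable {n : ℕ} {A : Matrix (Fin n) (Fin n) ℝ}

theorem trace_mul_self (hA : IsAdj A) : (A * A).trace = 2 * edges A := by
  obtain ⟨h01, hsymm, hdiag⟩ := hA
  have hsq : ∀ i j, A i j * A j i = A i j := fun i j => by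
    rw [← hsymm i j]; rcases h01 i j with h | h <;> simp [h]
  simp only [Matrix.trace, Matrix.diag, Matrix.mul_apply, hsq]
  rw [sum_sum_eq_two_nsmul_sum_sum_lt _ hsymm hdiag, nsmul_eq_mul, edges, Nat.cast_ofNat]

theorem sum_eigenvalues_sq (hA : IsAdj A) (hH : A.IsHermitian) :
    ∑ i, hH.eigenvalues i ^ 2 = 2 * edges A := by
  rw [← hH.trace_mul_self_eq_sum_eigenvalues_sq, hA.trace_mul_self]

end IsAdj

theorem vnorm_eq_norm {n : ℕ} (v : Fin n → ℝ) : vnorm v = ‖WithLp.toLp 2 v‖ := by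
  simp [vnorm, EuclideanSpace.norm_eq]

theorem spectral_mean_norm_bound_general {n N : ℕ}
    (A : Fin N → Matrix (Fin n) (Fin n) ℝ) (hadj : ∀ k, IsAdj (A k))
    (hA : ∀ k, (A k).IsHermitian)
    (Abar : Matrix (Fin n) (Fin n) ℝ)
    (hAbar : Abar.IsHermitian)
    (hmin : ∀ (B : Matrix (Fin n) (Fin n) ℝ), IsAdj B → ∀ hB : B.IsHermitian,
      ∑ k : Fin N, (vnorm (hAbar.eigenvalues - (hA k).eigenvalues)) ^ 2 ≤
        ∑ k : Fin N, (vnorm (hB.eigenvalues - (hA k).eigenvalues)) ^ 2)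
    (hk₀ : ∃ k₀ : Fin N, vnorm ((hA k₀).eigenvalues) ≤
      vnorm (fun i => (1 : ℝ) / N * ∑ k : Fin N, (hA k).eigenvalues i)) :
    vnorm hAbar.eigenvalues ≤
      3 * Real.sqrt (2 * ((1 : ℝ) / N * ∑ k : Fin N, edges (A k))) := by
  obtain ⟨k₀, hk₀⟩ := hk₀
  set a : Fin N → EuclideanSpace ℝ (Fin n) := fun k => WithLp.toLp 2 (hA k).eigenvalues
  have hmean : WithLp.toLp 2 (fun i => (1 : ℝ) / N * ∑ k : Fin N, (hA k).eigenvalues i) =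
      (#(univ : Finset (Fin N)) : ℝ)⁻¹ • ∑ k, a k := by
    ext i
    simp [a]
  have hdist (x : Fin n → ℝ) :
      ∑ k, vnorm (x - (hA k).eigenvalues) ^ 2 = ∑ k, ‖WithLp.toLp 2 x - a k‖ ^ 2 := by
    simp [vnorm_eq_norm, a]
  have hnorm_sq (k : Fin N) : ‖a k‖ ^ 2 = 2 * edges (A k) := by
    rw [← vnorm_eq_norm, vnorm, Real.sq_sqrt (sum_nonneg fun i _ => sq_nonneg _)]
    exact (hadj k).sum_eigenvalues_sq (hA k)
  have hmean_sq : (#(univ : Finset (Fin N)) : ℝ)⁻¹ * ∑ k, ‖a k‖ ^ 2 =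
      2 * ((1 : ℝ) / N * ∑ k : Fin N, edges (A k)) := by
    simp only [hnorm_sq, ← mul_sum, card_univ, Fintype.card_fin]
    ring
  rw [vnorm_eq_norm]
  calc _ ≤ 3 * ‖(#(univ : Finset (Fin N)) : ℝ)⁻¹ • ∑ k, a k‖ :=
        norm_le_three_mul_norm_centroid univ a ⟨k₀, mem_univ _⟩
          (x := WithLp.toLp 2 hAbar.eigenvalues) (y := a k₀)
          (by rw [← hdist, ← hdist]; exact hmin _ (hadj k₀) (hA k₀))
          (by rw [← hmean, ← vnorm_eq_norm, ← vnorm_eq_norm]; exact hk₀)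
    _ ≤ _ := by
        rw [← hmean_sq]
        gcongr
        exact norm_centroid_le_sqrt_inv_card_mul_sum_sq univ a

theorem spectral_mean_norm_bound {n N : ℕ} (hN : 0 < N)
    (A : Fin N → Matrix (Fin n) (Fin n) ℝ) (hadj : ∀ k, IsAdj (A k))
    (hA : ∀ k, (A k).IsHermitian)
    (Abar : Matrix (Fin n) (Fin n) ℝ) (hAbaradj : IsAdj Abar)
    (hAbar : Abar.IsHermitian)
    (hmin : ∀ (B : Matrix (Fin n) (Fin n) ℝ), IsAdj B → ∀ hB : B.IsHermitian,
      ∑ k : Fin N, (vnorm (hAbar.eigenvalues - (hA k).eigenvalues)) ^ 2 ≤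
        ∑ k : Fin N, (vnorm (hB.eigenvalues - (hA k).eigenvalues)) ^ 2)
    (hk₀ : ∃ k₀ : Fin N, vnorm ((hA k₀).eigenvalues) ≤
      vnorm (fun i => (1 : ℝ) / N * ∑ k : Fin N, (hA k).eigenvalues i)) :
    vnorm hAbar.eigenvalues ≤
      3 * Real.sqrt (2 * ((1 : ℝ) / N * ∑ k : Fin N, edges (A k))) :=
  spectral_mean_norm_bound_general A hadj hA Abar hAbar hmin hk₀
end
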